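/- Let (Ω, ℱ, μ) be a probability space, 𝒢 ⊆ ℱ a sub-σ-algebra, and Z, g : Ω → ℝ^n with Z strongly 𝒢-measurable, Z ∈ L²(μ), g ∈ L²(μ). Let G be a real symmetric n×n matrix, τ ∈ ℝ with x · (G x) ≥ τ ‖x‖² for all x ∈ ℝ^n, b ∈ ℝ^n, and z⋆ ∈ ℝ^n with G z⋆ = b. Suppose E[g | 𝒢](ω) = G Z(ω) − b for μ-almost every ω (conditional unbiasedness), and let η ≥ 0. Then ∫ ‖Z(ω) − η g(ω) − z⋆‖² dμ(ω) ≤ (1 − 2ητ) ∫ ‖Z(ω) − z⋆‖² dμ(ω) + η² ∫ ‖g(ω)‖² dμ(ω). -/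

import Mathlib

open Matrix MeasureTheory
open scoped RealInnerProductSpace

/-!
Put `F = Z - z⋆` and expand `‖F - η g‖²`. The only term that needs care is the cross term
`E⟪F, g⟫`: since `F` is `𝒢`-measurable it can be pulled out of `E[· | 𝒢]`, so
`E⟪F, g⟫ = E⟪F, E[g | 𝒢]⟫ = E⟪F, G F⟫ ≥ τ E‖F‖²`, using `G z⋆ = b`.
-/

section

variable {Ω E : Type*} [NormedAddCommGroup E] [InnerProductSpace ℝ E]
  {mΩ : MeasurableSpace Ω} {μ : Measure Ω}

theorem MeasureTheory.MemLp.integrable_inner {f g : Ω → E} (hf : MemLp f 2 μ)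
    (hg : MemLp g 2 μ) : Integrable (fun ω => ⟪f ω, g ω⟫) μ :=
  memLp_one_iff_integrable.1 ((innerSL ℝ).memLp_of_bilin 1 hf hg)

theorem integral_norm_sub_smul_sq {f g : Ω → E} (hf : MemLp f 2 μ) (hg : MemLp g 2 μ) (η : ℝ) :
    ∫ ω, ‖f ω - η • g ω‖ ^ 2 ∂μ =
      ∫ ω, ‖f ω‖ ^ 2 ∂μ - 2 * η * ∫ ω, ⟪f ω, g ω⟫ ∂μ + η ^ 2 * ∫ ω, ‖g ω‖ ^ 2 ∂μ := by
  have hexpand : ∀ ω, ‖f ω - η • g ω‖ ^ 2 =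
      ‖f ω‖ ^ 2 - 2 * η * ⟪f ω, g ω⟫ + η ^ 2 * ‖g ω‖ ^ 2 := fun ω => by
    rw [norm_sub_sq_real, real_inner_smul_right, norm_smul, mul_pow, Real.norm_eq_abs, sq_abs]
    ring
  have hf2 := hf.norm.integrable_sq
  have hfg := (hf.integrable_inner hg).const_mul (2 * η)
  simp_rw [hexpand]
  rw [integral_add, integral_sub hf2 hfg, integral_const_mul, integral_const_mul]
  · exact hf2.sub hfg
  · exact hg.norm.integrable_sq.const_mul _

theorem mul_integral_norm_sq_le_integral_inner_of_condExp_eq [CompleteSpace E]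
    {m : MeasurableSpace Ω} (hm : m ≤ mΩ) [SigmaFinite (μ.trim hm)]
    {A : E → E} {τ : ℝ} (hA : ∀ x, τ * ‖x‖ ^ 2 ≤ ⟪x, A x⟫) {f g : Ω → E}
    (hf : StronglyMeasurable[m] f) (hf2 : Integrable (fun ω => ‖f ω‖ ^ 2) μ)
    (hfg : Integrable (fun ω => ⟪f ω, g ω⟫) μ) (hg : Integrable g μ)
    (hcond : μ[g|m] =ᵐ[μ] fun ω => A (f ω)) :
    τ * ∫ ω, ‖f ω‖ ^ 2 ∂μ ≤ ∫ ω, ⟪f ω, g ω⟫ ∂μ := by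
  have hpull : μ[fun ω => ⟪f ω, g ω⟫|m] =ᵐ[μ] fun ω => ⟪f ω, A (f ω)⟫ := by
    filter_upwards [condExp_bilin_of_stronglyMeasurable_left (innerSL ℝ) hf hfg hg, hcond]
      with ω hbilin hω
    rw [← hω]
    exact hbilin
  rw [← integral_condExp hm (f := fun ω => ⟪f ω, g ω⟫), integral_congr_ae hpull,
    ← integral_const_mul]
  exact integral_mono (hf2.const_mul τ) (integrable_condExp.congr hpull) fun ω => hA (f ω)

end

theorem expected_one_step_descent_general {Ω : Type*} {mΩ : MeasurableSpace Ω}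
    (μ : Measure Ω) [IsProbabilityMeasure μ]
    {𝒢 : MeasurableSpace Ω} (h𝒢 : 𝒢 ≤ mΩ) {n : ℕ}
    (Z g : Ω → EuclideanSpace ℝ (Fin n))
    (hZmeas : StronglyMeasurable[𝒢] Z)
    (hZ : MemLp Z 2 μ) (hg : MemLp g 2 μ)
    (G : Matrix (Fin n) (Fin n) ℝ) (τ : ℝ)
    (hlb : ∀ x : EuclideanSpace ℝ (Fin n),
      τ * ‖x‖ ^ 2 ≤ ⟪x, Matrix.toEuclideanLin G x⟫)
    (b zstar : EuclideanSpace ℝ (Fin n))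
    (hzstar : Matrix.toEuclideanLin G zstar = b)
    (hunbiased : μ[g|𝒢] =ᵐ[μ] fun ω => Matrix.toEuclideanLin G (Z ω) - b)
    (η : ℝ) (hη : 0 ≤ η) :
    ∫ ω, ‖Z ω - η • g ω - zstar‖ ^ 2 ∂μ ≤
      (1 - 2 * η * τ) * ∫ ω, ‖Z ω - zstar‖ ^ 2 ∂μ + η ^ 2 * ∫ ω, ‖g ω‖ ^ 2 ∂μ := by
  set F := fun ω => Z ω - zstar with hF_def
  have hF : MemLp F 2 μ := hZ.sub (memLp_const zstar)
  have hcond : μ[g|𝒢] =ᵐ[μ] fun ω => Matrix.toEuclideanLin G (F ω) := by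
    filter_upwards [hunbiased] with ω hω
    rw [hω, hF_def, map_sub, hzstar]
  have hdescent := mul_integral_norm_sq_le_integral_inner_of_condExp_eq h𝒢 hlb (f := F)
    (hZmeas.sub stronglyMeasurable_const) hF.norm.integrable_sq (hF.integrable_inner hg)
    (hg.integrable one_le_two) hcond
  have hshift : ∀ ω, Z ω - η • g ω - zstar = F ω - η • g ω := fun ω => sub_right_comm _ _ _
  simp_rw [hshift]
  rw [integral_norm_sub_smul_sq hF hg η]
  nlinarith [mul_le_mul_of_nonneg_left hdescent hη]

/-- Expected one-step descent with a conditionally unbiased stochastic gradient: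
if `Z` is strongly `𝒢`-measurable, `Z, g ∈ L²(μ)`, `G` is a real symmetric matrix
with `x ⬝ (G x) ≥ τ ‖x‖²` for all `x`, `G z⋆ = b`, `E[g | 𝒢] = G Z − b` a.e., and
`η ≥ 0`, then
`∫ ‖Z − η g − z⋆‖² dμ ≤ (1 − 2ητ) ∫ ‖Z − z⋆‖² dμ + η² ∫ ‖g‖² dμ`. -/
theorem expected_one_step_descent {Ω : Type*} {mΩ : MeasurableSpace Ω}
    (μ : Measure Ω) [IsProbabilityMeasure μ]
    {𝒢 : MeasurableSpace Ω} (h𝒢 : 𝒢 ≤ mΩ) {n : ℕ}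
    (Z g : Ω → EuclideanSpace ℝ (Fin n))
    (hZmeas : StronglyMeasurable[𝒢] Z)
    (hZ : MemLp Z 2 μ) (hg : MemLp g 2 μ)
    (G : Matrix (Fin n) (Fin n) ℝ) (hGsymm : G.IsSymm) (τ : ℝ)
    (hlb : ∀ x : EuclideanSpace ℝ (Fin n),
      τ * ‖x‖ ^ 2 ≤ ⟪x, Matrix.toEuclideanLin G x⟫)
    (b zstar : EuclideanSpace ℝ (Fin n))
    (hzstar : Matrix.toEuclideanLin G zstar = b)
    (hunbiased : μ[g|𝒢] =ᵐ[μ] fun ω => Matrix.toEuclideanLin G (Z ω) - b)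
    (η : ℝ) (hη : 0 ≤ η) :
    ∫ ω, ‖Z ω - η • g ω - zstar‖ ^ 2 ∂μ ≤
      (1 - 2 * η * τ) * ∫ ω, ‖Z ω - zstar‖ ^ 2 ∂μ + η ^ 2 * ∫ ω, ‖g ω‖ ^ 2 ∂μ :=
  expected_one_step_descent_general μ h𝒢 Z g hZmeas hZ hg G τ hlb b zstar hzstar hunbiased η hη
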